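/- arXiv:2403.01577 — 2 statements merged into one kernel-verified Lean document; each statement's English description precedes it below -/
import Mathlib

section
/- Let A be a finite-dimensional unital ℂ-algebra with an antilinear antihomomorphism ‡ : A → A such that ‡∘‡ = id and ‡ is positive, meaning f‡ · f = 0 implies f = 0 for all f ∈ A. Then A is semisimple. -/
open scoped ComplexConjugate

/-!
An Artinian ring is semisimple as soon as its Jacobson radical vanishes, and that radical is a
nilpotent left ideal. For `x` in the radical, `x‡ x` lies in it too, hence is nilpotent, and it is
self-adjoint. Positivity kills self-adjoint nilpotents: if `y‡ = y` then `y² = y‡ y`, so `y² = 0`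
forces `y = 0`, and iterating along `y ^ 2 ^ n` handles any nilpotency index. Thus `x‡ x = 0`,
so `x = 0`.
-/

section PositiveInvolution

variable {R : Type*} [Ring R] {dag : R → R}

theorem eq_zero_of_pow_two_pow_eq_zero_of_positive
    (hmul : ∀ x y, dag (x * y) = dag y * dag x) (hpos : ∀ f, dag f * f = 0 → f = 0) (n : ℕ) :
    ∀ {y : R}, dag y = y → y ^ 2 ^ n = 0 → y = 0 := by
  induction n with
  | zero => intro y _ h; simpa using h
  | succ n ih =>
    intro y hy h
    have hsq : dag (y * y) = y * y := by rw [hmul, hy]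
    have hyy : y * y = 0 := ih hsq (by rwa [pow_succ', pow_mul, sq] at h)
    exact hpos y (by rwa [hy])

theorem eq_zero_of_isNilpotent_of_positive
    (hmul : ∀ x y, dag (x * y) = dag y * dag x) (hpos : ∀ f, dag f * f = 0 → f = 0)
    {y : R} (hy : dag y = y) (hnil : IsNilpotent y) : y = 0 := by
  obtain ⟨k, hk⟩ := hnil
  exact eq_zero_of_pow_two_pow_eq_zero_of_positive hmul hpos k hy
    (pow_eq_zero_of_le Nat.lt_two_pow_self.le hk)

theorem IsArtinianRing.jacobson_eq_bot_of_positive [IsArtinianRing R]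
    (hmul : ∀ x y, dag (x * y) = dag y * dag x) (hinv : ∀ x, dag (dag x) = x)
    (hpos : ∀ f, dag f * f = 0 → f = 0) : Ring.jacobson R = ⊥ := by
  obtain ⟨n, hn⟩ := IsSemiprimaryRing.isNilpotent (R := R)
  refine (Submodule.eq_bot_iff _).mpr fun x hx => hpos x ?_
  have hmem : dag x * x ∈ Ring.jacobson R := (Ring.jacobson R).mul_mem_left _ hx
  refine eq_zero_of_isNilpotent_of_positive hmul hpos (by rw [hmul, hinv]) ⟨n, ?_⟩
  simpa [hn] using Ideal.pow_mem_pow hmem n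

end PositiveInvolution

theorem semisimple_of_positive_involution_general
    {A : Type*} [Ring A] [Algebra ℂ A] [FiniteDimensional ℂ A]
    (dag : A → A)
    (hmul : ∀ x y, dag (x * y) = dag y * dag x)
    (hinv : ∀ x, dag (dag x) = x)
    (hpos : ∀ f : A, dag f * f = 0 → f = 0) :
    IsSemisimpleRing A := by
  have : IsArtinianRing A := IsArtinianRing.of_finite ℂ A
  exact IsArtinianRing.isSemisimpleRing_iff_jacobson.mpr
    (IsArtinianRing.jacobson_eq_bot_of_positive hmul hinv hpos)

/-- A finite-dimensional unital ℂ-algebra with a positive antilinear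
involution is semisimple. -/
theorem semisimple_of_positive_involution
    {A : Type*} [Ring A] [Algebra ℂ A] [FiniteDimensional ℂ A]
    (dag : A → A)
    (hadd : ∀ x y, dag (x + y) = dag x + dag y)
    (hsmul : ∀ (c : ℂ) (x : A), dag (c • x) = (conj c) • dag x)
    (hmul : ∀ x y, dag (x * y) = dag y * dag x)
    (hinv : ∀ x, dag (dag x) = x)
    (hpos : ∀ f : A, dag f * f = 0 → f = 0) :
    IsSemisimpleRing A :=
  semisimple_of_positive_involution_general dag hmul hinv hpos
end

section
/- Let S be a symmetric unitary n×n complex matrix, with index set I, such that all entries S_{1q} of the first row are nonzero real positive. Define N_{ab}^c = Σ_x S_{ax}S_{bx}conj(S_{cx})/S_{1x}, and let ī denote the index with S_{ī x} = conj(S_{i x}). Then Σ_{i,j∈I} Σ_{k∈I} N_{ī j}^{k} N_{ī j}^{k} = Σ_{q∈I} 1/(S_{1q})². -/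
open scoped ComplexConjugate

private lemma pull4 {α : Type*} [Fintype α] (f : α → α → α → α → ℂ) :
    ∑ a, ∑ b, ∑ c, ∑ x, f a b c x = ∑ x, ∑ a, ∑ b, ∑ c, f a b c x := by
  have h3 : ∀ (g : α → α → α → ℂ),
      ∑ b, ∑ c, ∑ x, g b c x = ∑ x, ∑ b, ∑ c, g b c x := by
    intro g
    rw [show (∑ b, ∑ c, ∑ x, g b c x) = ∑ b, ∑ x, ∑ c, g b c x from
      Finset.sum_congr rfl fun b _ => Finset.sum_comm, Finset.sum_comm]
  rw [show (∑ a, ∑ b, ∑ c, ∑ x, f a b c x) = ∑ a, ∑ x, ∑ b, ∑ c, f a b c x from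
    Finset.sum_congr rfl fun a _ => h3 _, Finset.sum_comm]

private lemma factor3 {α : Type*} [Fintype α] (a b c : α → ℂ) (d : ℂ) :
    ∑ i, ∑ j, ∑ k, a i * (b j * (c k * d)) = (∑ i, a i) * ((∑ j, b j) * ((∑ k, c k) * d)) := by
  rw [Finset.sum_mul]
  refine Finset.sum_congr rfl fun i _ => ?_
  rw [Finset.sum_mul, Finset.mul_sum]
  refine Finset.sum_congr rfl fun j _ => ?_
  rw [Finset.sum_mul, Finset.mul_sum, Finset.mul_sum]

/-- Dimension identity for the torus algebra: for a symmetric unitary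
matrix `S` with real positive first row and charge conjugation `bar` satisfying
`S (bar i) x = conj (S i x)`, one has `∑_{i,j,k} N_{ī j}^k · N_{ī j}^k = ∑_q 1/S_{1q}²`. -/
theorem torus_algebra_dimension
    {I : Type*} [Fintype I] [DecidableEq I] (one : I)
    (S : Matrix I I ℂ)
    (hsymm : S.transpose = S)
    (hU : S ∈ Matrix.unitaryGroup I ℂ)
    (hreal : ∀ x, (S one x).im = 0)
    (hpos : ∀ x, 0 < (S one x).re)
    (bar : I → I)
    (hbar : ∀ i x, S (bar i) x = conj (S i x))
    (N : I → I → I → ℂ)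
    (hN : ∀ a b c, N a b c = ∑ x, S a x * S b x * conj (S c x) / S one x) :
    ∑ i, ∑ j, ∑ k, N (bar i) j k * N (bar i) j k = ∑ q, 1 / (S one q) ^ 2 := by
  classical
  have hS : ∀ i x : I, S i x = S x i := fun i x => (congrFun (congrFun hsymm i) x).symm
  have hcol : ∀ x y : I, ∑ j, conj (S j x) * S j y = if x = y then 1 else 0 := by
    intro x y
    have h := Matrix.mem_unitaryGroup_iff'.mp hU
    have h2 := congrFun (congrFun h x) y
    simpa [Matrix.mul_apply, Matrix.one_apply, Matrix.star_apply] using h2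
  have hcol' : ∀ x y : I, ∑ j, S j x * conj (S j y) = if x = y then 1 else 0 := by
    intro x y
    have := congrArg (starRingEnd ℂ) (hcol x y)
    simpa [map_sum, mul_comm, apply_ite (starRingEnd ℂ)] using this
  have hconjbar : ∀ i y : I, conj (S i y) = S i (bar y) := by
    intro i y
    rw [hS i (bar y), hbar, ← hS i y]
  have hA : ∀ x y : I, ∑ i, conj (S i x) * conj (S i y) = if x = bar y then 1 else 0 := by
    intro x y
    simp_rw [hconjbar _ y]
    exact hcol x (bar y)
  have hB : ∀ x y : I, ∑ j, S j x * S j y = if x = bar y then 1 else 0 := by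
    intro x y
    have : ∀ j, S j y = conj (S j (bar y)) := by
      intro j
      rw [← hconjbar j y, Complex.conj_conj]
    simp_rw [this]
    exact hcol' x (bar y)
  have hbarone : ∀ y : I, S one (bar y) = S one y := by
    intro y
    rw [← hconjbar one y, Complex.conj_eq_iff_im]
    exact hreal y
  -- expand everything
  simp_rw [hN, hbar, Finset.sum_mul_sum]
  calc
    ∑ i, ∑ j, ∑ k, ∑ x, ∑ y,
        (conj (S i x) * S j x * conj (S k x) / S one x) *
        (conj (S i y) * S j y * conj (S k y) / S one y)
      = ∑ i, ∑ j, ∑ k, ∑ x, ∑ y,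
        (conj (S i x) * conj (S i y)) * ((S j x * S j y) *
          ((conj (S k x) * conj (S k y)) * (1 / S one x * (1 / S one y)))) := by
        refine Finset.sum_congr rfl fun i _ => Finset.sum_congr rfl fun j _ =>
          Finset.sum_congr rfl fun k _ => Finset.sum_congr rfl fun x _ =>
          Finset.sum_congr rfl fun y _ => ?_
        ring
    _ = ∑ x, ∑ i, ∑ j, ∑ k, ∑ y,
        (conj (S i x) * conj (S i y)) * ((S j x * S j y) *
          ((conj (S k x) * conj (S k y)) * (1 / S one x * (1 / S one y)))) :=
        pull4 _
    _ = ∑ x, ∑ y, ∑ i, ∑ j, ∑ k,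
        (conj (S i x) * conj (S i y)) * ((S j x * S j y) *
          ((conj (S k x) * conj (S k y)) * (1 / S one x * (1 / S one y)))) :=
        Finset.sum_congr rfl fun x _ => pull4 _
    _ = ∑ x, ∑ y,
        (∑ i, conj (S i x) * conj (S i y)) * ((∑ j, S j x * S j y) *
          ((∑ k, conj (S k x) * conj (S k y)) * (1 / S one x * (1 / S one y)))) :=
        Finset.sum_congr rfl fun x _ => Finset.sum_congr rfl fun y _ => factor3 _ _ _ _
    _ = ∑ q, 1 / (S one q) ^ 2 := by
        simp_rw [hA, hB]
        rw [Finset.sum_comm]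
        simp only [ite_mul, one_mul, zero_mul]
        simp only [Finset.sum_ite_eq', Finset.mem_univ, if_true, if_pos]
        refine Finset.sum_congr rfl fun y _ => ?_
        simp only [hbarone]
        ring
end
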